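/- arXiv:2307.10828 — 5 statements merged into one kernel-verified Lean document; each statement's English description precedes it below -/
import Mathlib

section
/- Let (L, [·,·]) be a Lie algebra over a field K of characteristic zero, λ ∈ K, and d : L → L a linear map satisfying d[a,b] = [d(a),b] + [a,d(b)] + λ[a,b] for all a,b ∈ L (a modified λ-differential Lie algebra). Define a trilinear bracket on L by [a,b,c] := [[a,b],c]. Then (L, [·,·,·], d) is a modified (2λ)-differential Lie triple system; in particular [·,·,·] satisfies the Lie triple system axioms and d[a,b,c] = [d(a),b,c] + [a,d(b),c] + [a,b,d(c)] + 2λ[a,b,c]. -/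
/-- If `(L, [·,·], d)` is a modified `λ`-differential Lie algebra, then
`L` with the ternary bracket `[a,b,c] := [[a,b],c]` and the same `d` is a modified
`(2λ)`-differential Lie triple system. -/
theorem modified_differential_lie_algebra_to_lts
    {K L : Type*} [Field K] [CharZero K] [LieRing L] [LieAlgebra K L]
    (lam : K) (d : L →ₗ[K] L)
    (hd : ∀ a b : L, d ⁅a, b⁆ = ⁅d a, b⁆ + ⁅a, d b⁆ + lam • ⁅a, b⁆) :
    (∀ x y z : L, ⁅⁅x, y⁆, z⁆ + ⁅⁅y, x⁆, z⁆ = 0)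
    ∧ (∀ x y z : L, ⁅⁅x, y⁆, z⁆ + ⁅⁅z, x⁆, y⁆ + ⁅⁅y, z⁆, x⁆ = 0)
    ∧ (∀ a b x y z : L,
        ⁅⁅a, b⁆, ⁅⁅x, y⁆, z⁆⁆
          = ⁅⁅⁅⁅a, b⁆, x⁆, y⁆, z⁆ + ⁅⁅x, ⁅⁅a, b⁆, y⁆⁆, z⁆ + ⁅⁅x, y⁆, ⁅⁅a, b⁆, z⁆⁆)
    ∧ (∀ a b c : L,
        d ⁅⁅a, b⁆, c⁆
          = ⁅⁅d a, b⁆, c⁆ + ⁅⁅a, d b⁆, c⁆ + ⁅⁅a, b⁆, d c⁆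
            + (2 * lam) • ⁅⁅a, b⁆, c⁆) := by
  have hsk : ∀ u v : L, ⁅u, v⁆ = -⁅v, u⁆ := fun u v => (neg_eq_iff_eq_neg.mp (lie_skew v u)).symm ▸ rfl
  refine ⟨fun x y z => ?_, fun x y z => ?_, fun a b x y z => ?_, fun a b c => ?_⟩
  · rw [hsk y x, neg_lie]; abel
  · rw [hsk ⁅x,y⁆ z, hsk ⁅z,x⁆ y, hsk ⁅y,z⁆ x,
      show -⁅z,⁅x,y⁆⁆ + -⁅y,⁅z,x⁆⁆ + -⁅x,⁅y,z⁆⁆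
        = -(⁅x,⁅y,z⁆⁆ + ⁅y,⁅z,x⁆⁆ + ⁅z,⁅x,y⁆⁆) by abel,
      lie_jacobi, neg_zero]
  · rw [leibniz_lie ⁅a,b⁆ ⁅x,y⁆ z, leibniz_lie ⁅a,b⁆ x y, add_lie]
  · rw [hd, hd, add_lie, add_lie, smul_lie, two_mul, add_smul]; abel
end

section
/- Let (L, [·,·,·], d) be a modified λ-differential Lie triple system and (V, θ, d_V) a representation of it. Define on L ⊕ V the trilinear bracket [x+u, y+v, z+w] := [x,y,z] + D(x,y)(w) − θ(x,z)(v) + θ(y,z)(u), where D(x,y) = θ(y,x) − θ(x,y), and the linear map (d ⊕ d_V)(x+u) := d(x) + d_V(u). Then (L ⊕ V, [·,·,·], d ⊕ d_V) is a modified λ-differential Lie triple system (the semidirect product). -/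
/-- The semidirect product bracket on `L ⊕ V`:
`[x+u, y+v, z+w] = [x,y,z] + D(x,y)w − θ(x,z)v + θ(y,z)u`, `D(x,y) = θ(y,x) − θ(x,y)`. -/
def sdBracket {K L V : Type*} [Field K]
    [AddCommGroup L] [Module K L] [AddCommGroup V] [Module K V]
    (br : L →ₗ[K] L →ₗ[K] L →ₗ[K] L) (θ : L →ₗ[K] L →ₗ[K] V →ₗ[K] V)
    (p q r : L × V) : L × V :=
  (br p.1 q.1 r.1,
    (θ q.1 p.1 r.2 - θ p.1 q.1 r.2) - θ p.1 r.1 q.2 + θ q.1 r.1 p.2)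

set_option maxHeartbeats 1000000 in
/-- Given a representation `(V, θ, d_V)` of a modified `λ`-differential
Lie triple system `(L, br, d)`, the semidirect product `L ⊕ V` with the bracket above
and the operator `(d ⊕ d_V)(x+u) = d(x) + d_V(u)` is a modified `λ`-differential Lie
triple system. -/
theorem semidirect_product_modified_differential_lts
    {K L V : Type*} [Field K] [CharZero K]
    [AddCommGroup L] [Module K L] [AddCommGroup V] [Module K V]
    (br : L →ₗ[K] L →ₗ[K] L →ₗ[K] L) (lam : K)
    (hskew : ∀ x y z : L, br x y z + br y x z = 0)
    (hcyc : ∀ x y z : L, br x y z + br z x y + br y z x = 0)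
    (hfund : ∀ a b x y z : L,
      br a b (br x y z) = br (br a b x) y z + br x (br a b y) z + br x y (br a b z))
    (θ : L →ₗ[K] L →ₗ[K] V →ₗ[K] V)
    (hrep1 : ∀ x y a b : L, ∀ v : V,
      θ a b (θ x y v) - θ y b (θ x a v) - θ x (br y a b) v
        + (θ a y (θ x b v) - θ y a (θ x b v)) = 0)
    (hrep2 : ∀ x y a b : L, ∀ v : V,
      θ a b (θ y x v - θ x y v) - (θ y x (θ a b v) - θ x y (θ a b v))
        + θ (br x y a) b v + θ a (br x y b) v = 0)
    (d : L →ₗ[K] L)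
    (hd : ∀ a b c : L,
      d (br a b c) = br (d a) b c + br a (d b) c + br a b (d c) + lam • br a b c)
    (dV : V →ₗ[K] V)
    (hdV : ∀ x y : L, ∀ v : V,
      dV (θ x y v) = θ (d x) y v + θ x (d y) v + θ x y (dV v) + lam • θ x y v) :
    (∀ P Q R : L × V,
      sdBracket br θ P Q R + sdBracket br θ Q P R = 0)
    ∧ (∀ P Q R : L × V,
      sdBracket br θ P Q R + sdBracket br θ R P Q + sdBracket br θ Q R P = 0)
    ∧ (∀ A B X Y Z : L × V,
      sdBracket br θ A B (sdBracket br θ X Y Z)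
        = sdBracket br θ (sdBracket br θ A B X) Y Z
          + sdBracket br θ X (sdBracket br θ A B Y) Z
          + sdBracket br θ X Y (sdBracket br θ A B Z))
    ∧ (∀ A B C : L × V,
      (d (sdBracket br θ A B C).1, dV (sdBracket br θ A B C).2)
        = sdBracket br θ (d A.1, dV A.2) B C
          + sdBracket br θ A (d B.1, dV B.2) C
          + sdBracket br θ A B (d C.1, dV C.2)
          + lam • sdBracket br θ A B C) := by
  refine ⟨?_, ?_, ?_, ?_⟩
  · intro P Q R
    simp only [sdBracket, Prod.mk_add_mk, Prod.mk_eq_zero]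
    constructor
    · exact hskew P.1 Q.1 R.1
    · abel
  · intro P Q R
    simp only [sdBracket, Prod.mk_add_mk, Prod.mk_eq_zero]
    constructor
    · exact hcyc P.1 Q.1 R.1
    · abel
  · intro A B X Y Z
    obtain ⟨a, a2⟩ := A; obtain ⟨b, b2⟩ := B
    obtain ⟨x, u⟩ := X; obtain ⟨y, v⟩ := Y; obtain ⟨z, w⟩ := Z
    simp only [sdBracket, Prod.mk_add_mk, Prod.mk.injEq, map_add, map_sub]
    constructor
    · exact hfund a b x y z
    · have h1 := hrep2 a b x z v
      have h2 := hrep2 a b y z u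
      have h3 := hrep2 a b x y w
      have h4 := hrep2 a b y x w
      have h5 := hrep1 a x y z b2
      have h6 := hrep1 b x y z a2
      simp only [map_sub, map_add] at h1 h2 h3 h4 h5 h6 ⊢
      linear_combination (norm := module) h1 - h2 + h3 - h4 + h5 - h6
  · intro A B C
    obtain ⟨a, a2⟩ := A; obtain ⟨b, b2⟩ := B; obtain ⟨c, c2⟩ := C
    simp only [sdBracket, Prod.mk_add_mk, Prod.smul_mk, Prod.mk.injEq, map_add, map_sub]
    constructor
    · rw [hd]
    · have k1 := hdV b a c2
      have k2 := hdV a b c2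
      have k3 := hdV a c b2
      have k4 := hdV b c a2
      linear_combination (norm := module) k1 - k2 - k3 + k4
end

section
/- Let (L[[t]], ν_t, d_t) and (L[[t]], ν'_t, d'_t) be two equivalent 1-parameter formal deformations of a modified λ-differential Lie triple system (L, ν, d), connected by a formal isomorphism φ_t = id + Σ_{i≥1} φᵢtⁱ satisfying φ_t∘ν'_t = ν_t∘(φ_t × φ_t × φ_t) and φ_t∘d'_t = d_t∘φ_t. Then the infinitesimals differ by a coboundary: for all a,b,c ∈ L, ν'₁(a,b,c) − ν₁(a,b,c) = [φ₁(a),b,c] + [a,φ₁(b),c] + [a,b,φ₁(c)] − φ₁([a,b,c]) and d'₁(a) − d₁(a) = d(φ₁(a)) − φ₁(d(a)). Hence [(ν'₁,d'₁)] = [(ν₁,d₁)] in the third cohomology group. -/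
open Finset

namespace Finset.Nat

theorem sum_antidiagonal_one {M : Type*} [AddCommMonoid M] (f : ℕ × ℕ → M) :
    ∑ p ∈ antidiagonal 1, f p = f (0, 1) + f (1, 0) := by
  simp [sum_antidiagonal_succ]

end Finset.Nat

section FirstOrder

variable {M : Type*} [AddCommGroup M]

/-- `h` is the `t¹`-coefficient of `φ_t ∘ d'_t = d_t ∘ φ_t`. -/
theorem coeff_one_sub_eq_of_comp_eq_comp {R : Type*} [Semiring R] [Module R M]
    (φ d d' : ℕ → (M →ₗ[R] M))
    (hφ0 : φ 0 = LinearMap.id) (hd0 : d' 0 = d 0)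
    (h : ∀ a : M, ∑ p ∈ antidiagonal 1, φ p.1 (d' p.2 a) = ∑ p ∈ antidiagonal 1, d p.1 (φ p.2 a))
    (a : M) : d' 1 a - d 1 a = d 0 (φ 1 a) - φ 1 (d 0 a) := by
  have h1 := h a
  simp only [Finset.Nat.sum_antidiagonal_one, hφ0, hd0, LinearMap.id_apply] at h1
  linear_combination (norm := abel) h1

/-- `h` is the `t¹`-coefficient of `φ_t ∘ ν'_t = ν_t ∘ (φ_t × φ_t × φ_t)`. -/
theorem coeff_one_sub_eq_of_comp_eq_comp₃ {R : Type*} [CommSemiring R] [Module R M]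
    (ν ν' : ℕ → (M →ₗ[R] M →ₗ[R] M →ₗ[R] M))
    (φ : ℕ → (M →ₗ[R] M)) (hφ0 : φ 0 = LinearMap.id) (hν0 : ν' 0 = ν 0)
    (h : ∀ a b c : M, ∑ p ∈ antidiagonal 1, φ p.1 (ν' p.2 a b c)
      = ∑ p ∈ antidiagonal 1, ∑ q ∈ antidiagonal p.2, ∑ r ∈ antidiagonal q.2,
          ν p.1 (φ q.1 a) (φ r.1 b) (φ r.2 c))
    (a b c : M) :
    ν' 1 a b c - ν 1 a b c
      = ν 0 (φ 1 a) b c + ν 0 a (φ 1 b) c + ν 0 a b (φ 1 c) - φ 1 (ν 0 a b c) := by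
  have h1 := h a b c
  simp only [Finset.Nat.sum_antidiagonal_one, Finset.Nat.antidiagonal_zero, sum_singleton, hφ0, hν0,
    LinearMap.id_apply] at h1
  linear_combination (norm := abel) h1

end FirstOrder

theorem equivalent_deformations_infinitesimals_cohomologous_general
    {K L : Type*} [Field K] [AddCommGroup L] [Module K L]
    (ν ν' : ℕ → (L →ₗ[K] L →ₗ[K] L →ₗ[K] L)) (dd dd' : ℕ → (L →ₗ[K] L))
    (φ : ℕ → (L →ₗ[K] L))
    (hν0 : ν' 0 = ν 0) (hd0 : dd' 0 = dd 0) (hφ0 : φ 0 = LinearMap.id)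
    (hiso1 : ∀ (n : ℕ) (a b c : L),
      ∑ p ∈ Finset.HasAntidiagonal.antidiagonal n, φ p.1 (ν' p.2 a b c)
        = ∑ p ∈ Finset.HasAntidiagonal.antidiagonal n, ∑ q ∈ Finset.HasAntidiagonal.antidiagonal p.2,
            ∑ r ∈ Finset.HasAntidiagonal.antidiagonal q.2,
              ν p.1 (φ q.1 a) (φ r.1 b) (φ r.2 c))
    (hiso2 : ∀ (n : ℕ) (a : L),
      ∑ p ∈ Finset.HasAntidiagonal.antidiagonal n, φ p.1 (dd' p.2 a)
        = ∑ p ∈ Finset.HasAntidiagonal.antidiagonal n, dd p.1 (φ p.2 a)) :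
    (∀ a b c : L,
      ν' 1 a b c - ν 1 a b c
        = ν 0 (φ 1 a) b c + ν 0 a (φ 1 b) c + ν 0 a b (φ 1 c)
          - φ 1 (ν 0 a b c))
    ∧ (∀ a : L, dd' 1 a - dd 1 a = dd 0 (φ 1 a) - φ 1 (dd 0 a)) :=
  ⟨coeff_one_sub_eq_of_comp_eq_comp₃ ν ν' φ hφ0 hν0 (hiso1 1),
    coeff_one_sub_eq_of_comp_eq_comp φ dd dd' hφ0 hd0 (hiso2 1)⟩

/-- If `φ_t = id + Σ_{i≥1} φᵢtⁱ` is a formal isomorphism from the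
deformation `(ν'_t, d'_t)` to the deformation `(ν_t, d_t)` of a modified
`λ`-differential Lie triple system `(L, ν₀, d₀)` (expressed by the coefficient
equations of `φ_t∘ν'_t = ν_t∘(φ_t×φ_t×φ_t)` and `φ_t∘d'_t = d_t∘φ_t`), then the
infinitesimals differ by the coboundary of `φ₁`. -/
theorem equivalent_deformations_infinitesimals_cohomologous
    {K L : Type*} [Field K] [CharZero K] [AddCommGroup L] [Module K L]
    (lam : K)
    (ν ν' : ℕ → (L →ₗ[K] L →ₗ[K] L →ₗ[K] L)) (dd dd' : ℕ → (L →ₗ[K] L))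
    (φ : ℕ → (L →ₗ[K] L))
    (hν0 : ν' 0 = ν 0) (hd0 : dd' 0 = dd 0) (hφ0 : φ 0 = LinearMap.id)
    (hskew : ∀ x y z : L, ν 0 x y z + ν 0 y x z = 0)
    (hcyc : ∀ x y z : L, ν 0 x y z + ν 0 z x y + ν 0 y z x = 0)
    (hfund : ∀ a b x y z : L,
      ν 0 a b (ν 0 x y z)
        = ν 0 (ν 0 a b x) y z + ν 0 x (ν 0 a b y) z + ν 0 x y (ν 0 a b z))
    (hmod : ∀ a b c : L,
      dd 0 (ν 0 a b c)
        = ν 0 (dd 0 a) b c + ν 0 a (dd 0 b) c + ν 0 a b (dd 0 c)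
          + lam • ν 0 a b c)
    (hiso1 : ∀ (n : ℕ) (a b c : L),
      ∑ p ∈ Finset.HasAntidiagonal.antidiagonal n, φ p.1 (ν' p.2 a b c)
        = ∑ p ∈ Finset.HasAntidiagonal.antidiagonal n, ∑ q ∈ Finset.HasAntidiagonal.antidiagonal p.2,
            ∑ r ∈ Finset.HasAntidiagonal.antidiagonal q.2,
              ν p.1 (φ q.1 a) (φ r.1 b) (φ r.2 c))
    (hiso2 : ∀ (n : ℕ) (a : L),
      ∑ p ∈ Finset.HasAntidiagonal.antidiagonal n, φ p.1 (dd' p.2 a)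
        = ∑ p ∈ Finset.HasAntidiagonal.antidiagonal n, dd p.1 (φ p.2 a)) :
    (∀ a b c : L,
      ν' 1 a b c - ν 1 a b c
        = ν 0 (φ 1 a) b c + ν 0 a (φ 1 b) c + ν 0 a b (φ 1 c)
          - φ 1 (ν 0 a b c))
    ∧ (∀ a : L, dd' 1 a - dd 1 a = dd 0 (φ 1 a) - φ 1 (dd 0 a)) :=
  equivalent_deformations_infinitesimals_cohomologous_general ν ν' dd dd' φ hν0 hd0 hφ0 hiso1 hiso2
end

section
/- Let 0 → V → L̂ → L → 0 be an abelian extension of a modified λ-differential Lie triple system (L, [·,·,·], d) by (V, d_V) (so V is an abelian ideal of L̂: any bracket with two or more entries from V vanishes), with projection p and a section σ : L → L̂ (p∘σ = id_L). Define ϑ : L × L → End(V) by ϑ(a,b)u = [u, σ(a), σ(b)]_{L̂}. Then (V, ϑ, d_V) is a representation of (L, [·,·,·], d); in particular ϑ(a,b)ϑ(x,y)u − ϑ(y,b)ϑ(x,a)u − ϑ(x,[y,a,b])u + (ϑ(a,y) − ϑ(y,a))ϑ(x,b)u = 0, the second representation identity holds, ϑ is independent of the choice of section, and d_V(ϑ(x,y)u)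 = ϑ(d(x),y)u + ϑ(x,d(y))u + ϑ(x,y)d_V(u) + λϑ(x,y)u. -/
/-- Given an abelian extension `0 → V → L̂ → L → 0` of modified
`λ`-differential Lie triple systems with section `σ`, the maps
`ϑ(a,b)u = [u, σ(a), σ(b)]` (expressed here inside `L̂` via the inclusion `i`)
define a representation of `(L, [·,·,·], d)` on `V`: the two Lie triple system
representation identities hold, `ϑ` is independent of the choice of section, and the
modified `λ`-differential compatibility with `d_V` holds. -/
theorem abelian_extension_representation
    {K L V Lh : Type*} [Field K] [CharZero K]
    [AddCommGroup L] [Module K L] [AddCommGroup V] [Module K V]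
    [AddCommGroup Lh] [Module K Lh]
    (brL : L →ₗ[K] L →ₗ[K] L →ₗ[K] L) (brH : Lh →ₗ[K] Lh →ₗ[K] Lh →ₗ[K] Lh)
    (lam : K)
    (hskewL : ∀ x y z : L, brL x y z + brL y x z = 0)
    (hcycL : ∀ x y z : L, brL x y z + brL z x y + brL y z x = 0)
    (hfundL : ∀ a b x y z : L,
      brL a b (brL x y z)
        = brL (brL a b x) y z + brL x (brL a b y) z + brL x y (brL a b z))
    (hskewH : ∀ x y z : Lh, brH x y z + brH y x z = 0)
    (hcycH : ∀ x y z : Lh, brH x y z + brH z x y + brH y z x = 0)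
    (hfundH : ∀ a b x y z : Lh,
      brH a b (brH x y z)
        = brH (brH a b x) y z + brH x (brH a b y) z + brH x y (brH a b z))
    (dL : L →ₗ[K] L) (dV : V →ₗ[K] V) (dH : Lh →ₗ[K] Lh)
    (hdL : ∀ a b c : L,
      dL (brL a b c)
        = brL (dL a) b c + brL a (dL b) c + brL a b (dL c) + lam • brL a b c)
    (hdH : ∀ a b c : Lh,
      dH (brH a b c)
        = brH (dH a) b c + brH a (dH b) c + brH a b (dH c) + lam • brH a b c)
    (i : V →ₗ[K] Lh) (p : Lh →ₗ[K] L)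
    (hi : Function.Injective i) (hp : Function.Surjective p)
    (hexact : LinearMap.range i = LinearMap.ker p)
    (hphom : ∀ x y z : Lh, p (brH x y z) = brL (p x) (p y) (p z))
    (hpd : ∀ x : Lh, p (dH x) = dL (p x))
    (hid : ∀ u : V, dH (i u) = i (dV u))
    (habelian : ∀ (u v : V) (x : Lh),
      brH x (i u) (i v) = 0 ∧ brH (i u) x (i v) = 0 ∧ brH (i u) (i v) x = 0)
    (σ : L →ₗ[K] Lh) (hσ : ∀ a : L, p (σ a) = a) :
    (∀ (x y a b : L) (u : V),
      brH (brH (i u) (σ x) (σ y)) (σ a) (σ b)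
        - brH (brH (i u) (σ x) (σ a)) (σ y) (σ b)
        - brH (i u) (σ x) (σ (brL y a b))
        + (brH (brH (i u) (σ x) (σ b)) (σ a) (σ y)
            - brH (brH (i u) (σ x) (σ b)) (σ y) (σ a)) = 0)
    ∧ (∀ (x y a b : L) (u : V),
      brH (brH (i u) (σ y) (σ x) - brH (i u) (σ x) (σ y)) (σ a) (σ b)
        - (brH (brH (i u) (σ a) (σ b)) (σ y) (σ x)
            - brH (brH (i u) (σ a) (σ b)) (σ x) (σ y))
        + brH (i u) (σ (brL x y a)) (σ b)
        + brH (i u) (σ a) (σ (brL x y b)) = 0)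
    ∧ (∀ (σ' : L →ₗ[K] Lh), (∀ a : L, p (σ' a) = a) →
        ∀ (a b : L) (u : V),
          brH (i u) (σ a) (σ b) = brH (i u) (σ' a) (σ' b))
    ∧ (∀ (x y : L) (u : V),
      dH (brH (i u) (σ x) (σ y))
        = brH (i u) (σ (dL x)) (σ y) + brH (i u) (σ x) (σ (dL y))
          + brH (i (dV u)) (σ x) (σ y) + lam • brH (i u) (σ x) (σ y)) := by
  -- kernel elements come from V
  have hker : ∀ z : Lh, p z = 0 → ∃ v : V, i v = z := by
    intro z hz
    have : z ∈ LinearMap.range i := by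
      rw [hexact]; exact hz
    exact this
  -- changing the middle entry by a kernel element doesn't change the bracket
  have key2 : ∀ (u : V) (t z w : Lh), p z = p w → brH (i u) z t = brH (i u) w t := by
    intro u t z w h
    obtain ⟨v, hv⟩ := hker (z - w) (by simp [map_sub, h])
    have hz : z = w + i v := by rw [hv]; abel
    rw [hz]
    have h0 := (habelian u v t).2.2
    simp [map_add, h0]
  have key3 : ∀ (u : V) (t z w : Lh), p z = p w → brH (i u) t z = brH (i u) t w := by
    intro u t z w h
    obtain ⟨v, hv⟩ := hker (z - w) (by simp [map_sub, h])
    have hz : z = w + i v := by rw [hv]; abel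
    rw [hz]
    have h0 := (habelian u v t).2.1
    simp [map_add, h0]
  -- basic Lie triple system consequence of skew-symmetry and the cyclic identity
  have L1 : ∀ w a y : Lh, brH w a y - brH w y a = brH y a w := by
    intro w a y
    linear_combination (norm := abel) hcycH w a y - hskewH y w a - hskewH a y w
  refine ⟨?_, ?_, ?_, ?_⟩
  · intro x y a b u
    rw [key3 u (σ x) (σ (brL y a b)) (brH (σ y) (σ a) (σ b))
      (by rw [hσ, hphom, hσ, hσ, hσ])]
    linear_combination (norm := abel)
      L1 (brH (i u) (σ x) (σ b)) (σ a) (σ y)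
        - hfundH (i u) (σ x) (σ y) (σ a) (σ b)
        - hskewH (brH (i u) (σ x) (σ a)) (σ y) (σ b)
  · intro x y a b u
    rw [key2 u (σ b) (σ (brL x y a)) (brH (σ x) (σ y) (σ a))
      (by rw [hσ, hphom, hσ, hσ, hσ]),
      key3 u (σ a) (σ (brL x y b)) (brH (σ x) (σ y) (σ b))
      (by rw [hσ, hphom, hσ, hσ, hσ])]
    have h1 := congrArg (fun t => brH t (σ a) (σ b)) (L1 (i u) (σ y) (σ x))
    have h2 := L1 (brH (i u) (σ a) (σ b)) (σ y) (σ x)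
    have h3 := hfundH (σ x) (σ y) (i u) (σ a) (σ b)
    linear_combination (norm := abel) h1 - h2 - h3
  · intro σ' hσ' a b u
    rw [key2 u (σ b) (σ a) (σ' a) (by rw [hσ, hσ']),
      key3 u (σ' a) (σ b) (σ' b) (by rw [hσ, hσ'])]
  · intro x y u
    rw [hdH, hid,
      key2 u (σ y) (dH (σ x)) (σ (dL x)) (by rw [hpd, hσ, hσ]),
      key3 u (σ x) (dH (σ y)) (σ (dL y)) (by rw [hpd, hσ, hσ])]
    abel
end

section
/- Let 0 → V → L̂ → L → 0 be an abelian extension of a modified λ-differential Lie triple system (L, [·,·,·], d) by (V, d_V), and let σ₁, σ₂ : L → L̂ be two sections. Let (ς_j, ϖ_j) for j = 1,2 be the associated 3-cocycles: ς_j(a,b,c) = [σ_j(a), σ_j(b), σ_j(c)]_{L̂} − σ_j([a,b,c]) and ϖ_j(a) = d̂(σ_j(a)) − σ_j(d(a)). Set ξ = σ₁ − σ₂ : L → V. Then (ς₁, ϖ₁) − (ς₂, ϖ₂) = ∂ξ, i.e., ς₁(a,b,c) − ς₂(a,b,c) = ϑ(b,c)ξ(a) − ϑ(a,c)ξ(b)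 + D(a,b)ξ(c) − ξ([a,b,c]) and ϖ₁(a) − ϖ₂(a) = d_V(ξ(a)) − ξ(d(a)). Hence the two 3-cocycles are cohomologous. -/
/-- For an abelian extension `0 → V → L̂ → L → 0` of modified
`λ`-differential Lie triple systems, the 3-cocycles `(ς₁, ϖ₁)` and `(ς₂, ϖ₂)`
associated to two sections `σ₁, σ₂` differ by the coboundary of `ξ = σ₁ − σ₂`
(all identities expressed inside `L̂` via the inclusion `i`); hence the two
3-cocycles are cohomologous. -/
theorem abelian_extension_cocycle_independent_of_section
    {K L V Lh : Type*} [Field K] [CharZero K]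
    [AddCommGroup L] [Module K L] [AddCommGroup V] [Module K V]
    [AddCommGroup Lh] [Module K Lh]
    (brL : L →ₗ[K] L →ₗ[K] L →ₗ[K] L) (brH : Lh →ₗ[K] Lh →ₗ[K] Lh →ₗ[K] Lh)
    (lam : K)
    (hskewL : ∀ x y z : L, brL x y z + brL y x z = 0)
    (hcycL : ∀ x y z : L, brL x y z + brL z x y + brL y z x = 0)
    (hfundL : ∀ a b x y z : L,
      brL a b (brL x y z)
        = brL (brL a b x) y z + brL x (brL a b y) z + brL x y (brL a b z))
    (hskewH : ∀ x y z : Lh, brH x y z + brH y x z = 0)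
    (hcycH : ∀ x y z : Lh, brH x y z + brH z x y + brH y z x = 0)
    (hfundH : ∀ a b x y z : Lh,
      brH a b (brH x y z)
        = brH (brH a b x) y z + brH x (brH a b y) z + brH x y (brH a b z))
    (dL : L →ₗ[K] L) (dV : V →ₗ[K] V) (dH : Lh →ₗ[K] Lh)
    (hdL : ∀ a b c : L,
      dL (brL a b c)
        = brL (dL a) b c + brL a (dL b) c + brL a b (dL c) + lam • brL a b c)
    (hdH : ∀ a b c : Lh,
      dH (brH a b c)
        = brH (dH a) b c + brH a (dH b) c + brH a b (dH c) + lam • brH a b c)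
    (i : V →ₗ[K] Lh) (p : Lh →ₗ[K] L)
    (hi : Function.Injective i) (hp : Function.Surjective p)
    (hexact : LinearMap.range i = LinearMap.ker p)
    (hphom : ∀ x y z : Lh, p (brH x y z) = brL (p x) (p y) (p z))
    (hpd : ∀ x : Lh, p (dH x) = dL (p x))
    (hid : ∀ u : V, dH (i u) = i (dV u))
    (habelian : ∀ (u v : V) (x : Lh),
      brH x (i u) (i v) = 0 ∧ brH (i u) x (i v) = 0 ∧ brH (i u) (i v) x = 0)
    (σ₁ σ₂ : L →ₗ[K] Lh)
    (hσ₁ : ∀ a : L, p (σ₁ a) = a) (hσ₂ : ∀ a : L, p (σ₂ a) = a) :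
    (∀ a b c : L,
      (brH (σ₁ a) (σ₁ b) (σ₁ c) - σ₁ (brL a b c))
          - (brH (σ₂ a) (σ₂ b) (σ₂ c) - σ₂ (brL a b c))
        = brH (σ₁ a - σ₂ a) (σ₂ b) (σ₂ c)
          - brH (σ₁ b - σ₂ b) (σ₂ a) (σ₂ c)
          + brH (σ₂ a) (σ₂ b) (σ₁ c - σ₂ c)
          - (σ₁ (brL a b c) - σ₂ (brL a b c)))
    ∧ (∀ a : L,
      (dH (σ₁ a) - σ₁ (dL a)) - (dH (σ₂ a) - σ₂ (dL a))
        = dH (σ₁ a - σ₂ a) - (σ₁ (dL a) - σ₂ (dL a))) := by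
  have hker : ∀ x : L, ∃ u : V, i u = σ₁ x - σ₂ x := by
    intro x
    have : σ₁ x - σ₂ x ∈ LinearMap.ker p := by
      simp [LinearMap.mem_ker, hσ₁, hσ₂]
    rw [← hexact] at this
    exact this
  constructor
  · intro a b c
    obtain ⟨ua, hua⟩ := hker a
    obtain ⟨ub, hub⟩ := hker b
    obtain ⟨uc, huc⟩ := hker c
    have ha : σ₁ a = σ₂ a + i ua := by rw [hua]; abel
    have hb : σ₁ b = σ₂ b + i ub := by rw [hub]; abel
    have hc : σ₁ c = σ₂ c + i uc := by rw [huc]; abel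
    have hsk : brH (σ₂ a) (i ub) (σ₂ c) = - brH (i ub) (σ₂ a) (σ₂ c) := by
      have := hskewH (i ub) (σ₂ a) (σ₂ c)
      linear_combination (norm := abel) this
    rw [← hua, ← hub, ← huc, ha, hb, hc]
    simp only [map_add, LinearMap.add_apply]
    rw [(habelian ub uc (σ₂ a)).1, (habelian ua uc (σ₂ b)).2.1,
      (habelian ua ub (σ₂ c)).2.2, (habelian ua ub (i uc)).2.2, hsk]
    abel
  · intro a
    simp only [map_sub]
    abel
end
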